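/- arXiv:2510.20133 — 2 statements merged into one kernel-verified Lean document; each statement's English description precedes it below -/
import Mathlib

section
/- The (n+1)-st term of the p-Zassenhaus filtration of the group U_{n+1}(F_p) of upper triangular unipotent (n+1)×(n+1) matrices over F_p is trivial. -/
/-- The subgroup generated by `p`-th powers of elements of `H`. -/
def Subgroup.pPow {G : Type*} [Group G] (H : Subgroup G) (p : ℕ) : Subgroup G :=
  Subgroup.closure {x : G | ∃ h ∈ H, x = h ^ p}

/-- The `p`-Zassenhaus filtration of a group `G`: `zassenhaus p hp G m` is `G_{(m)}`
(with the convention that the value at `0` is `⊤`). -/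
def zassenhaus (p : ℕ) (hp : 2 ≤ p) (G : Type*) [Group G] : ℕ → Subgroup G
  | 0 => ⊤
  | 1 => ⊤
  | (m + 2) =>
      (zassenhaus p hp G ((m + 1) / p + 1)).pPow p ⊔
        ⨆ i : Fin (m + 1),
          ⁅zassenhaus p hp G ((i : ℕ) + 1), zassenhaus p hp G (m + 1 - (i : ℕ))⁆
  decreasing_by
  · exact Nat.succ_lt_succ (Nat.div_lt_self (by omega) (by omega))
  · have := i.isLt; omega
  · have := i.isLt; omega


namespace ZassPaper

abbrev Mat (p n : ℕ) := Matrix (Fin (n + 1)) (Fin (n + 1)) (ZMod p)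

/-- `memV p n d a` : the strictly upper triangular matrix `a` has all entries vanishing
at superdiagonal distance `< d`, i.e. `a i j = 0` whenever `j - i ≤ d - 1`. -/
def memV (p n d : ℕ) (a : Mat p n) : Prop :=
  ∀ i j : Fin (n + 1), (j : ℕ) < (i : ℕ) + d → a i j = 0

lemma memV_mono (p n : ℕ) {d e : ℕ} (h : e ≤ d) {a : Mat p n} (ha : memV p n d a) :
    memV p n e a := fun i j hij => ha i j (by omega)

lemma memV_zero (p n d : ℕ) : memV p n d 0 := fun _ _ _ => rfl

lemma memV_add (p n : ℕ) {d : ℕ} {a b : Mat p n} (ha : memV p n d a) (hb : memV p n d b) :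
    memV p n d (a + b) := by
  intro i j h
  simp [Matrix.add_apply, ha i j h, hb i j h]

lemma memV_mul (p n : ℕ) {d e : ℕ} {a b : Mat p n} (ha : memV p n d a) (hb : memV p n e b) :
    memV p n (d + e) (a * b) := by
  intro i j h
  rw [Matrix.mul_apply]
  apply Finset.sum_eq_zero
  intro k _
  by_cases hk : (k : ℕ) < (i : ℕ) + d
  · rw [ha i k hk, zero_mul]
  · rw [hb k j (by omega), mul_zero]

variable (p n : ℕ) [Fact p.Prime]

def UTset : Set (GL (Fin (n + 1)) (ZMod p)) :=
  {A | ∃ a : Mat p n, memV p n 1 a ∧ (A : Mat p n) = 1 + a}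

lemma UTset_one : (1 : GL (Fin (n + 1)) (ZMod p)) ∈ UTset p n :=
  ⟨0, memV_zero p n 1, by simp⟩

lemma UTset_mul {A B : GL (Fin (n + 1)) (ZMod p)} (hA : A ∈ UTset p n) (hB : B ∈ UTset p n) :
    A * B ∈ UTset p n := by
  obtain ⟨a, ha, hA⟩ := hA
  obtain ⟨b, hb, hB⟩ := hB
  refine ⟨a + b + a * b, ?_, ?_⟩
  · exact memV_add p n (memV_add p n ha hb)
      (memV_mono p n (by omega) (memV_mul p n ha hb))
  · show ((A * B : GL (Fin (n + 1)) (ZMod p)) : Mat p n) = _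
    rw [Units.val_mul, hA, hB]
    noncomm_ring

lemma UTset_pow {A : GL (Fin (n + 1)) (ZMod p)} (hA : A ∈ UTset p n) (k : ℕ) :
    A ^ k ∈ UTset p n := by
  induction k with
  | zero => simpa using UTset_one p n
  | succ k ih => rw [pow_succ]; exact UTset_mul p n ih hA

lemma UTset_inv {A : GL (Fin (n + 1)) (ZMod p)} (hA : A ∈ UTset p n) :
    A⁻¹ ∈ UTset p n := by
  have h1 : A ^ Fintype.card (GL (Fin (n + 1)) (ZMod p)) = 1 := pow_card_eq_one
  have hc : 0 < Fintype.card (GL (Fin (n + 1)) (ZMod p)) := Fintype.card_pos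
  have : A⁻¹ = A ^ (Fintype.card (GL (Fin (n + 1)) (ZMod p)) - 1) := by
    have : A * A ^ (Fintype.card (GL (Fin (n + 1)) (ZMod p)) - 1) = 1 := by
      rw [← pow_succ', Nat.sub_add_cancel hc]
      exact h1
    exact ((inv_eq_of_mul_eq_one_right this).symm).symm
  rw [this]
  exact UTset_pow p n hA _

/-- The group of upper triangular unipotent `(n+1)×(n+1)` matrices over `F_p`,
as a subgroup of `GL (Fin (n+1)) (ZMod p)`. -/
def UT : Subgroup (GL (Fin (n + 1)) (ZMod p)) where
  carrier := UTset p n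
  one_mem' := UTset_one p n
  mul_mem' := UTset_mul p n
  inv_mem' := UTset_inv p n


end ZassPaper

/-! A descending filtration `H` with `H 1 = ⊤`, `(H k) ^ p ⊆ H (p k)` and
`⁅H i, H j⁆ ≤ H (i + j)` contains the `p`-Zassenhaus filtration termwise. For `U_{n+1}(F_p)`
take for `H d` the matrices `A` with `A - 1` vanishing on the diagonal and the first `d - 1`
superdiagonals. Commutators and `p`-th powers land in the right terms because
`A B A⁻¹ B⁻¹ - 1 = ((A - 1)(B - 1) - (B - 1)(A - 1)) A⁻¹ B⁻¹` and, in characteristic `p`,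
`A ^ p - 1 = (A - 1) ^ p`. Finally `H (n + 1)` is trivial. -/

theorem Subgroup.pPow_le_iff {G : Type*} [Group G] {H K : Subgroup G} {p : ℕ} :
    H.pPow p ≤ K ↔ ∀ h ∈ H, h ^ p ∈ K := by
  rw [Subgroup.pPow, Subgroup.closure_le]
  exact ⟨fun h x hx => h ⟨x, hx, rfl⟩, by rintro h _ ⟨x, hx, rfl⟩; exact h x hx⟩

theorem zassenhaus_le {p : ℕ} (hp : 2 ≤ p) {G : Type*} [Group G] (H : ℕ → Subgroup G)
    (h_anti : Antitone H) (h_one : H 1 = ⊤) (h_pow : ∀ k, ∀ x ∈ H k, x ^ p ∈ H (p * k))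
    (h_comm : ∀ i j, ⁅H i, H j⁆ ≤ H (i + j)) (m : ℕ) : zassenhaus p hp G m ≤ H m := by
  induction m using Nat.strong_induction_on with
  | _ m ih =>
    match m with
    | 0 => rw [zassenhaus, ← h_one]; exact h_anti zero_le_one
    | 1 => rw [zassenhaus, h_one]
    | m + 2 =>
      rw [zassenhaus]
      refine sup_le (Subgroup.pPow_le_iff.2 fun x hx => ?_) (iSup_le fun i => ?_)
      · have hlt : (m + 1) / p + 1 < m + 2 :=
          Nat.succ_lt_succ (Nat.div_lt_self (by omega) (by omega))
        have hle : m + 2 ≤ p * ((m + 1) / p + 1) := Nat.lt_mul_div_succ (m + 1) (by omega)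
        exact h_anti hle (h_pow _ x (ih _ hlt hx))
      · have hi := i.isLt
        calc ⁅zassenhaus p hp G (i + 1), zassenhaus p hp G (m + 1 - i)⁆
            ≤ ⁅H (i + 1), H (m + 1 - i)⁆ :=
              Subgroup.commutator_mono (ih _ (by omega)) (ih _ (by omega))
          _ ≤ H (i + 1 + (m + 1 - i)) := h_comm _ _
          _ = H (m + 2) := by congr 1; omega

namespace ZassPaper

section memV

variable {p n d e : ℕ} {a b : Mat p n}

lemma memV_neg (ha : memV p n d a) : memV p n d (-a) := fun i j h => by
  simp [ha i j h]

lemma memV_sub (ha : memV p n d a) (hb : memV p n d b) : memV p n d (a - b) := by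
  simpa only [sub_eq_add_neg] using memV_add p n ha (memV_neg hb)

lemma memV_zero_one : memV p n 0 (1 : Mat p n) := fun i j h =>
  Matrix.one_apply_ne (Fin.ne_of_gt (by simpa using h))

lemma memV_pow (ha : memV p n d a) (k : ℕ) : memV p n (k * d) (a ^ k) := by
  induction k with
  | zero => simpa using memV_zero_one
  | succ k ih => simpa only [pow_succ, Nat.succ_mul] using memV_mul p n ih ha

lemma memV_mul_unipotent_right (ha : memV p n d a) (hb : memV p n 1 (b - 1)) :
    memV p n d (a * b) := by
  have h : a * b = a + a * (b - 1) := by noncomm_ring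
  rw [h]
  exact memV_add p n ha (memV_mono p n (by omega) (memV_mul p n ha hb))

lemma memV_mul_sub_mul (ha : memV p n d (a - 1)) (hb : memV p n e (b - 1)) :
    memV p n (d + e) (a * b - b * a) := by
  have h : a * b - b * a = (a - 1) * (b - 1) - (b - 1) * (a - 1) := by noncomm_ring
  rw [h]
  exact memV_sub (memV_mul p n ha hb) (add_comm e d ▸ memV_mul p n hb ha)

lemma eq_zero_of_memV_succ (ha : memV p n (n + 1) a) : a = 0 := by
  ext i j
  exact ha i j (by omega)

end memV

variable (p n : ℕ) [Fact p.Prime]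

def toMat : UT p n →* Mat p n := (Units.coeHom (Mat p n)).comp (UT p n).subtype

variable {p n}

lemma toMat_injective : Function.Injective (toMat p n) := fun _ _ h =>
  Subtype.ext (Units.ext h)

lemma memV_toMat_sub_one (A : UT p n) : memV p n 1 (toMat p n A - 1) := by
  obtain ⟨a, ha, hA⟩ := A.2
  simpa [toMat, hA] using ha

lemma toMat_mul_toMat_inv (A : UT p n) : toMat p n A * toMat p n A⁻¹ = 1 := by
  rw [← map_mul, mul_inv_cancel, map_one]

lemma toMat_pow_char_sub_one (A : UT p n) : toMat p n (A ^ p) - 1 = (toMat p n A - 1) ^ p := by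
  rw [sub_pow_char_of_commute p (Commute.one_right _), one_pow, map_pow]

variable (p n)

def UTdepth (d : ℕ) : Subgroup (UT p n) where
  carrier := {A | memV p n d (toMat p n A - 1)}
  one_mem' := by simpa using memV_zero p n d
  mul_mem' {A B} hA hB := by
    have h : toMat p n (A * B) - 1 = (toMat p n A - 1) * toMat p n B + (toMat p n B - 1) := by
      rw [map_mul]; noncomm_ring
    rw [Set.mem_ofPred_eq, h]
    exact memV_add p n (memV_mul_unipotent_right hA (memV_toMat_sub_one B)) hB
  inv_mem' {A} hA := by
    have h : toMat p n A⁻¹ - 1 = -((toMat p n A - 1) * toMat p n A⁻¹) := by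
      rw [sub_mul, toMat_mul_toMat_inv, one_mul, neg_sub]
    rw [Set.mem_ofPred_eq, h]
    exact memV_neg (memV_mul_unipotent_right hA (memV_toMat_sub_one _))

variable {p n}

lemma mem_UTdepth {d : ℕ} {A : UT p n} : A ∈ UTdepth p n d ↔ memV p n d (toMat p n A - 1) :=
  Iff.rfl

lemma UTdepth_antitone : Antitone (UTdepth p n) := fun _ _ h _ hA => memV_mono p n h hA

lemma UTdepth_one : UTdepth p n 1 = ⊤ := eq_top_iff.2 fun A _ => memV_toMat_sub_one A

lemma pow_mem_UTdepth {d : ℕ} {A : UT p n} (hA : A ∈ UTdepth p n d) :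
    A ^ p ∈ UTdepth p n (p * d) := by
  rw [mem_UTdepth, toMat_pow_char_sub_one]
  exact memV_pow hA p

open scoped commutatorElement in
lemma commutator_UTdepth_le (d e : ℕ) : ⁅UTdepth p n d, UTdepth p n e⁆ ≤ UTdepth p n (d + e) := by
  refine Subgroup.commutator_le.2 fun A hA B hB => ?_
  have h : toMat p n ⁅A, B⁆ - 1 =
      (toMat p n A * toMat p n B - toMat p n B * toMat p n A) * toMat p n (A⁻¹ * B⁻¹) := by
    have hBA : B * A * (A⁻¹ * B⁻¹) = 1 := by group
    simp only [sub_mul, ← map_mul, hBA, map_one, commutatorElement_def, mul_assoc]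
  rw [mem_UTdepth, h]
  exact memV_mul_unipotent_right (memV_mul_sub_mul hA hB) (memV_toMat_sub_one _)

lemma UTdepth_succ_eq_bot : UTdepth p n (n + 1) = ⊥ := eq_bot_iff.2 fun A hA =>
  Subgroup.mem_bot.2 <| toMat_injective <| by
    rw [map_one]; exact sub_eq_zero.1 (eq_zero_of_memV_succ hA)

theorem stmt5_general (p n : ℕ) [Fact p.Prime] :
    zassenhaus p (Fact.out : p.Prime).two_le (UT p n) (n + 1) = ⊥ :=
  eq_bot_mono (zassenhaus_le _ (UTdepth p n) UTdepth_antitone UTdepth_one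
    (fun _ _ => pow_mem_UTdepth) commutator_UTdepth_le (n + 1)) UTdepth_succ_eq_bot

/-- The `(n+1)`-st term of the `p`-Zassenhaus filtration of `U_{n+1}(F_p)` is trivial. -/
theorem stmt5 (p n : ℕ) [Fact p.Prime] (hn : 1 ≤ n) :
    zassenhaus p (Fact.out : p.Prime).two_le (UT p n) (n + 1) = ⊥ :=
  stmt5_general p n

end ZassPaper
end

section
/- Let α : A → B and β : D → C be homomorphisms of abelian groups, and suppose given non-degenerate bilinear pairings ⟨·,·⟩₁ : A × C → F_p and ⟨·,·⟩₂ : B × D → F_p satisfying ⟨α(a), d⟩₂ = ⟨a, β(d)⟩₁ for all a ∈ A, d ∈ D. If A, B, C, D are finite, then the induced pairing coker(α) × ker(β) → F_p, ([b], d) ↦ ⟨b, d⟩₂, is well-defined and non-degenerate. -/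
/-!
A pairing into `ZMod p` that is separating on one side forces that side to be killed by `p`, so
all four groups are `ZMod p`-vector spaces and the statement becomes linear algebra. Since `C` is
finite, `e1` is a perfect pairing, so `e1` identifies `A` with the dual of `C`. If `e2 b` vanishes
on `ker β`, it lies in the range of the dual map of `β`, i.e. `e2 b = g ∘ β` with `g = e1 a`; by
adjointness `e2 (α a) = e2 b`, and left non-degeneracy of `e2` gives `α a = b`.
-/

open Function LinearMap

theorem AddMonoidHom.nsmul_eq_zero_of_separatingLeft {n : ℕ} {M N : Type*} [AddCommGroup M]
    [AddCommGroup N] (e : M →+ N →+ ZMod n) (he : ∀ m, (∀ k, e m k = 0) → m = 0) (m : M) :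
    n • m = 0 :=
  he _ fun k => by
    rw [map_nsmul, AddMonoidHom.nsmul_apply, nsmul_eq_mul, ZMod.natCast_self, zero_mul]

def AddMonoidHom.toZModBilin (n : ℕ) {M N : Type*} [AddCommGroup M] [AddCommGroup N]
    [Module (ZMod n) M] [Module (ZMod n) N] (e : M →+ N →+ ZMod n) :
    M →ₗ[ZMod n] N →ₗ[ZMod n] ZMod n :=
  ((AddMonoidHom.toZModLinearMapEquiv n).toAddMonoidHom.comp e).toZModLinearMap n

section

variable {n : ℕ} {M N : Type*} [AddCommGroup M] [AddCommGroup N] [Module (ZMod n) M]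
  [Module (ZMod n) N] {e : M →+ N →+ ZMod n}

theorem AddMonoidHom.injective_toZModBilin (he : ∀ m, (∀ k, e m k = 0) → m = 0) :
    Injective (e.toZModBilin n) :=
  LinearMap.ker_eq_bot.mp (LinearMap.separatingLeft_iff_ker_eq_bot.mp he)

theorem AddMonoidHom.injective_toZModBilin_flip (he : ∀ k, (∀ m, e m k = 0) → k = 0) :
    Injective (e.toZModBilin n).flip :=
  LinearMap.ker_eq_bot.mp (LinearMap.separatingRight_iff_flip_ker_eq_bot.mp he)

theorem AddMonoidHom.surjective_toZModBilin [Fact n.Prime] [Finite N]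
    (hl : ∀ m, (∀ k, e m k = 0) → m = 0) (hr : ∀ k, (∀ m, e m k = 0) → k = 0) :
    Surjective (e.toZModBilin n) :=
  have : FiniteDimensional (ZMod n) N := Module.Finite.of_finite
  have : (e.toZModBilin n).IsPerfPair :=
    .of_injective' (e.injective_toZModBilin hl) (e.injective_toZModBilin_flip hr)
  (IsPerfPair.bijective_left _).2

end

theorem LinearMap.mem_range_of_forall_mem_ker_pairing_eq_zero {K A B C D : Type*} [Field K]
    [AddCommGroup A] [AddCommGroup B] [AddCommGroup C] [AddCommGroup D]
    [Module K A] [Module K B] [Module K C] [Module K D]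
    (α : A →ₗ[K] B) (β : D →ₗ[K] C)
    (e1 : A →ₗ[K] C →ₗ[K] K) (e2 : B →ₗ[K] D →ₗ[K] K)
    (he1 : Surjective e1) (he2 : Injective e2) (hadj : ∀ a d, e2 (α a) d = e1 a (β d))
    {b : B} (hb : ∀ d ∈ ker β, e2 b d = 0) : b ∈ range α := by
  obtain ⟨g, hg⟩ : e2 b ∈ range β.dualMap := by
    rw [range_dualMap_eq_dualAnnihilator_ker, Submodule.mem_dualAnnihilator]
    exact hb
  obtain ⟨a, rfl⟩ := he1 g
  refine ⟨a, he2 (ext fun d => ?_)⟩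
  rw [hadj, ← hg, dualMap_apply]

theorem stmt15_general (p : ℕ) [Fact p.Prime]
    {A B C D : Type*} [AddCommGroup A] [AddCommGroup B] [AddCommGroup C] [AddCommGroup D]
    [Finite C]
    (α : A →+ B) (β : D →+ C)
    (e1 : A →+ C →+ ZMod p) (e2 : B →+ D →+ ZMod p)
    (h1l : ∀ a : A, (∀ c : C, e1 a c = 0) → a = 0)
    (h1r : ∀ c : C, (∀ a : A, e1 a c = 0) → c = 0)
    (h2l : ∀ b : B, (∀ d : D, e2 b d = 0) → b = 0)
    (h2r : ∀ d : D, (∀ b : B, e2 b d = 0) → d = 0)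
    (hadj : ∀ (a : A) (d : D), e2 (α a) d = e1 a (β d)) :
    (∀ (a : A), ∀ d ∈ β.ker, e2 (α a) d = 0) ∧
    (∀ b : B, (∀ d ∈ β.ker, e2 b d = 0) → b ∈ α.range) ∧
    (∀ d ∈ β.ker, (∀ b : B, e2 b d = 0) → d = 0) := by
  let _ := AddCommGroup.zmodModule (e1.nsmul_eq_zero_of_separatingLeft h1l)
  let _ := AddCommGroup.zmodModule (e2.nsmul_eq_zero_of_separatingLeft h2l)
  let _ := AddCommGroup.zmodModule (e1.flip.nsmul_eq_zero_of_separatingLeft h1r)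
  let _ := AddCommGroup.zmodModule (e2.flip.nsmul_eq_zero_of_separatingLeft h2r)
  refine ⟨fun a d hd => by rw [hadj, hd, map_zero], fun b hb => ?_, fun d _ hd => h2r d hd⟩
  obtain ⟨a, rfl⟩ := (α.toZModLinearMap p).mem_range_of_forall_mem_ker_pairing_eq_zero
    (β.toZModLinearMap p) _ _ (e1.surjective_toZModBilin h1l h1r)
    (e2.injective_toZModBilin h2l) hadj hb
  exact ⟨a, rfl⟩

/-- Given adjoint non-degenerate `F_p`-valued pairings on finite abelian groups,
the induced pairing `coker(α) × ker(β) → F_p` is well-defined and non-degenerate. -/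
theorem stmt15 (p : ℕ) [Fact p.Prime]
    {A B C D : Type*} [AddCommGroup A] [AddCommGroup B] [AddCommGroup C] [AddCommGroup D]
    [Finite A] [Finite B] [Finite C] [Finite D]
    (α : A →+ B) (β : D →+ C)
    (e1 : A →+ C →+ ZMod p) (e2 : B →+ D →+ ZMod p)
    (h1l : ∀ a : A, (∀ c : C, e1 a c = 0) → a = 0)
    (h1r : ∀ c : C, (∀ a : A, e1 a c = 0) → c = 0)
    (h2l : ∀ b : B, (∀ d : D, e2 b d = 0) → b = 0)
    (h2r : ∀ d : D, (∀ b : B, e2 b d = 0) → d = 0)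
    (hadj : ∀ (a : A) (d : D), e2 (α a) d = e1 a (β d)) :
    (∀ (a : A), ∀ d ∈ β.ker, e2 (α a) d = 0) ∧
    (∀ b : B, (∀ d ∈ β.ker, e2 b d = 0) → b ∈ α.range) ∧
    (∀ d ∈ β.ker, (∀ b : B, e2 b d = 0) → d = 0) :=
  stmt15_general p α β e1 e2 h1l h1r h2l h2r hadj
end
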